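/- Let Ω = ℝⁿ₊ and let w : Ω → [0,∞) be continuous. Fix ν > 0 and a > 0, and define h_{ν,a}(w)(x') = inf{x₀ > 0 : sup_{z ∈ Γ_a((x₀,x'))} w(z) < ν} for x' ∈ ℝ^{n−1} (with inf ∅ = ∞). If h_{ν,a}(w)(x') < ∞ for every x' ∈ ℝ^{n−1}, then h_{ν,a}(w) is Lipschitz with constant 1/a: |h_{ν,a}(w)(x') − h_{ν,a}(w)(y')| ≤ a^{−1}|x' − y'| for all x', y' ∈ ℝ^{n−1}. -/

import Mathlib

open MeasureTheory Metric Set Filter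
open scoped ENNReal NNReal Topology

noncomputable section

namespace DP

/-- Points of the upper half space model: `ℝ^{n+1}` with the Euclidean metric.
(The boundary dimension is `n`; the paper's dimension is `n+1`.) -/
abbrev Pt (n : ℕ) := EuclideanSpace ℝ (Fin (n + 1))

/-- Boundary points `ℝ^n`. -/
abbrev BPt (n : ℕ) := EuclideanSpace ℝ (Fin n)

variable {n : ℕ}

/-- Assemble a point from its height `x0` and horizontal coordinates `x'`. -/
def pt (x0 : ℝ) (x' : BPt n) : Pt n :=
  (EuclideanSpace.equiv (Fin (n + 1)) ℝ).symm
    (Fin.cons x0 (EuclideanSpace.equiv (Fin n) ℝ x'))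

/-- The height `x₀ = δ(x)` of a point (distance to the boundary). -/
def dd (x : Pt n) : ℝ := x 0

/-- Horizontal coordinates of a point. -/
def bdry (x : Pt n) : BPt n :=
  (EuclideanSpace.equiv (Fin n) ℝ).symm (fun i => x i.succ)

/-- The upper half space `Ω = ℝ^{n+1}_+`. -/
def upperHalf (n : ℕ) : Set (Pt n) := {x | 0 < dd x}

/-- The nontangential cone `Γ_a(Q) = {(y₀,y') ∈ Ω : a|q₀ − y₀| > |q' − y'|}`. -/
def cone (a : ℝ) (Q : Pt n) : Set (Pt n) :=
  {y | 0 < dd y ∧ dist (bdry Q) (bdry y) < a * |dd Q - dd y|}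

/-- Truncated cone `Γ_a^h(Q)`. -/
def tcone (a h : ℝ) (Q : Pt n) : Set (Pt n) := cone a Q ∩ {y | dd y ≤ h}

/-- `L^p` average of `w` over the Whitney ball `B_{δ(x)/2}(x)`. -/
def avg (p : ℝ) {E : Type*} [NormedAddCommGroup E] (w : Pt n → E) (x : Pt n) : ℝ≥0∞ :=
  ((volume (ball x (dd x / 2)))⁻¹ *
    ∫⁻ z in ball x (dd x / 2), (‖w z‖₊ : ℝ≥0∞) ^ p) ^ (1 / p)

/-- Averaged nontangential maximal function `Ñ_{p,a}(w)` at `x' ∈ ∂Ω`. -/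
def ntMax (p a : ℝ) {E : Type*} [NormedAddCommGroup E] (w : Pt n → E) (x' : BPt n) : ℝ≥0∞ :=
  ⨆ x ∈ cone a (pt 0 x'), avg p w x

/-- Truncated averaged nontangential maximal function `Ñ^h_{p,a}(w)`. -/
def ntMaxT (p a h : ℝ) {E : Type*} [NormedAddCommGroup E] (w : Pt n → E) (x' : BPt n) : ℝ≥0∞ :=
  ⨆ x ∈ tcone a h (pt 0 x'), avg p w x

/-- Partial derivative `∂_k u`. -/
def pdG {N : ℕ} (u : EuclideanSpace ℝ (Fin N) → ℂ) (k : Fin N)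
    (x : EuclideanSpace ℝ (Fin N)) : ℂ :=
  fderiv ℝ u x (EuclideanSpace.single k (1 : ℝ))

/-- Partial derivative `∂_k u` in the half-space model. -/
def pd (u : Pt n → ℂ) (k : Fin (n + 1)) (x : Pt n) : ℂ := pdG u k x

/-- The `p`-adapted square function of a scalar function `w`, aperture `a`:
`S_{p,a}(w)(x') = (∫_{Γ_a(x')} |∇w|² |w|^{p−2} δ(x)^{2−(n+1)} dx)^{1/2}`. -/
def sqF (p a : ℝ) (w : Pt n → ℂ) (x' : BPt n) : ℝ≥0∞ :=
  (∫⁻ x in cone a (pt 0 x'),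
      (‖fderiv ℝ w x‖₊ : ℝ≥0∞) ^ (2 : ℝ) * (‖w x‖₊ : ℝ≥0∞) ^ (p - 2) *
        ENNReal.ofReal (dd x ^ ((2 : ℝ) - (n + 1)))) ^ (1 / (2 : ℝ))

/-- Truncated `p`-adapted square function `S^h_{p,a}`. -/
def sqFT (p a h : ℝ) (w : Pt n → ℂ) (x' : BPt n) : ℝ≥0∞ :=
  (∫⁻ x in tcone a h (pt 0 x'),
      (‖fderiv ℝ w x‖₊ : ℝ≥0∞) ^ (2 : ℝ) * (‖w x‖₊ : ℝ≥0∞) ^ (p - 2) *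
        ENNReal.ofReal (dd x ^ ((2 : ℝ) - (n + 1)))) ^ (1 / (2 : ℝ))

/-- `S_{p,a}(∇_T u)`: sum of square functions of the tangential derivatives. -/
def sqTan (p a : ℝ) (u : Pt n → ℂ) (x' : BPt n) : ℝ≥0∞ :=
  ∑ k : Fin n, sqF p a (pd u k.succ) x'

/-- Truncated `S^h_{p,a}(∇_T u)`. -/
def sqTanT (p a h : ℝ) (u : Pt n → ℂ) (x' : BPt n) : ℝ≥0∞ :=
  ∑ k : Fin n, sqFT p a h (pd u k.succ) x'

/-- `S_{p,a}(∇u)`: sum of square functions of all partial derivatives. -/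
def sqGrad (p a : ℝ) (u : Pt n → ℂ) (x' : BPt n) : ℝ≥0∞ :=
  ∑ k : Fin (n + 1), sqF p a (pd u k) x'

/-- Truncated `S^h_{p,a}(∇u)`. -/
def sqGradT (p a h : ℝ) (u : Pt n → ℂ) (x' : BPt n) : ℝ≥0∞ :=
  ∑ k : Fin (n + 1), sqFT p a h (pd u k) x'

/-- The ℝ-linear map `J_p(α+iβ) = α/p + iβ/p'`. -/
def Jp (p : ℝ) {N : ℕ} (ξ : Fin N → ℂ) : Fin N → ℂ := fun i =>
  (((ξ i).re / p : ℝ) : ℂ) + Complex.I * (((ξ i).im * (1 - 1 / p) : ℝ) : ℂ)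

/-- `A` is `p`-elliptic on `Ω` with constants `lam` (lower) and `Lam` (upper):
`Re⟨A(x)ξ, J_p ξ⟩ ≥ λ_p |ξ|²` and `|⟨A(x)ξ, η⟩| ≤ Λ|ξ||η|` for a.e. `x ∈ Ω`. -/
def IsPElliptic (p lam Lam : ℝ) {N : ℕ} (Ω : Set (EuclideanSpace ℝ (Fin N)))
    (A : EuclideanSpace ℝ (Fin N) → Fin N → Fin N → ℂ) : Prop :=
  (∀ᵐ x ∂(volume.restrict Ω), ∀ ξ : EuclideanSpace ℂ (Fin N),
      lam * ‖ξ‖ ^ 2 ≤ (∑ i, (∑ j, A x i j * ξ j) * (starRingEnd ℂ) (Jp p ξ i)).re) ∧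
  (∀ᵐ x ∂(volume.restrict Ω), ∀ ξ η : EuclideanSpace ℂ (Fin N),
      ‖∑ i, (∑ j, A x i j * ξ j) * (starRingEnd ℂ) (η i)‖ ≤ Lam * ‖ξ‖ * ‖η‖)

/-- `p₀ = inf{p > 1 : A is p-elliptic}` (for some lower constant, with upper constant `Lam`). -/
def pZero {N : ℕ} (Ω : Set (EuclideanSpace ℝ (Fin N)))
    (A : EuclideanSpace ℝ (Fin N) → Fin N → Fin N → ℂ) (Lam : ℝ) : ℝ :=
  sInf {q : ℝ | 1 < q ∧ ∃ l : ℝ, 0 < l ∧ IsPElliptic q l Lam Ω A}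

/-- The Carleson norm of a measure on the upper half space:
`‖μ‖_C = sup_{Q,r} μ(T(Δ_r(Q))) / σ(Δ_r(Q))`. -/
def carlesonNorm (μ : Measure (Pt n)) : ℝ≥0∞ :=
  ⨆ (Q : BPt n) (r : ℝ) (_ : 0 < r),
    μ (upperHalf n ∩ ball (pt 0 Q) r) / volume (ball (0 : BPt n) r)

/-- The density `sup_{B_{δ(x)/2}(x)} (|∇A|² + |B|²) · δ(x)`. -/
def coefDensity (A : Pt n → Fin (n + 1) → Fin (n + 1) → ℂ)
    (B : Pt n → EuclideanSpace ℂ (Fin (n + 1))) (x : Pt n) : ℝ≥0∞ :=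
  (⨆ y ∈ ball x (dd x / 2),
      ((‖fderiv ℝ A y‖₊ : ℝ≥0∞) ^ (2 : ℝ) + (‖B y‖₊ : ℝ≥0∞) ^ (2 : ℝ))) *
    ENNReal.ofReal (dd x)

/-- The measure `dμ(x) = sup_{B_{δ(x)/2}(x)}(|∇A|² + |B|²) δ(x) dx` on `Ω`. -/
def coefMeasure (A : Pt n → Fin (n + 1) → Fin (n + 1) → ℂ)
    (B : Pt n → EuclideanSpace ℂ (Fin (n + 1))) : Measure (Pt n) :=
  (volume.restrict (upperHalf n)).withDensity (coefDensity A B)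

/-- The density `sup_{B_{δ(x)/2}(x)} |∇A|² · δ(x)` (no drift term). -/
def coefDensityA (A : Pt n → Fin (n + 1) → Fin (n + 1) → ℂ) (x : Pt n) : ℝ≥0∞ :=
  (⨆ y ∈ ball x (dd x / 2), (‖fderiv ℝ A y‖₊ : ℝ≥0∞) ^ (2 : ℝ)) * ENNReal.ofReal (dd x)

/-- The measure `dμ(x) = sup_{B_{δ(x)/2}(x)} |∇A|² δ(x) dx` on `Ω`. -/
def coefMeasureA (A : Pt n → Fin (n + 1) → Fin (n + 1) → ℂ) : Measure (Pt n) :=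
  (volume.restrict (upperHalf n)).withDensity (coefDensityA A)

/-- Weak solution of `∂_i(A_{ij}∂_j u) + B_i ∂_i u = 0` in the upper half space:
`∫ A_{ij} ∂_j u ∂_i φ dx = ∫ B_i ∂_i u φ dx` for all test functions `φ`. -/
def WeakSol (A : Pt n → Fin (n + 1) → Fin (n + 1) → ℂ)
    (B : Pt n → EuclideanSpace ℂ (Fin (n + 1))) (u : Pt n → ℂ) : Prop :=
  ∀ φ : Pt n → ℂ, ContDiff ℝ (⊤ : ℕ∞) φ → HasCompactSupport φ → tsupport φ ⊆ upperHalf n →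
    ∫ x in upperHalf n, ∑ i, ∑ j, A x i j * pd u j x * pd φ i x =
      ∫ x in upperHalf n, (∑ i, B x i * pd u i x) * φ x

/-- Weak solution of `∂_i(A_{ij}∂_j u) = 0` in the upper half space. -/
def WeakSol0 (A : Pt n → Fin (n + 1) → Fin (n + 1) → ℂ) (u : Pt n → ℂ) : Prop :=
  ∀ φ : Pt n → ℂ, ContDiff ℝ (⊤ : ℕ∞) φ → HasCompactSupport φ → tsupport φ ⊆ upperHalf n →
    ∫ x in upperHalf n, ∑ i, ∑ j, A x i j * pd u j x * pd φ i x = 0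

/-- Weak solution of `div(A∇u) = 0` on a general open set `Ω`. -/
def WeakSolOn {N : ℕ} (Ω : Set (EuclideanSpace ℝ (Fin N)))
    (A : EuclideanSpace ℝ (Fin N) → Fin N → Fin N → ℂ)
    (u : EuclideanSpace ℝ (Fin N) → ℂ) : Prop :=
  ∀ φ : EuclideanSpace ℝ (Fin N) → ℂ,
    ContDiff ℝ (⊤ : ℕ∞) φ → HasCompactSupport φ → tsupport φ ⊆ Ω →
      ∫ x in Ω, ∑ i, ∑ j, A x i j * pdG u j x * pdG φ i x = 0

/-- `u` has finite energy: `∇u ∈ L²(Ω)`. -/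
def Energy (u : Pt n → ℂ) : Prop :=
  (∫⁻ x in upperHalf n, (‖fderiv ℝ u x‖₊ : ℝ≥0∞) ^ (2 : ℝ)) < ∞

/-- `u` attains `f` as its boundary datum (a.e. vertical convergence to the trace). -/
def HasTrace (u : Pt n → ℂ) (f : BPt n → ℂ) : Prop :=
  ∀ᵐ x' : BPt n ∂volume, Tendsto (fun t : ℝ => u (pt t x')) (𝓝[>] (0 : ℝ)) (𝓝 (f x'))

/-- The homogeneous Besov `Ḃ^{2,2}_{1/2}(∂Ω)` seminorm (squared). -/
def besovSq (f : BPt n → ℂ) : ℝ≥0∞ :=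
  ∫⁻ x' : BPt n, ∫⁻ y' : BPt n,
    (‖f x' - f y'‖₊ : ℝ≥0∞) ^ (2 : ℝ) * ENNReal.ofReal (dist x' y' ^ (-((n : ℝ) + 1)))

/-- `L^e` "norm" over a boundary set. -/
def lpS (e : ℝ) (s : Set (BPt n)) (g : BPt n → ℝ≥0∞) : ℝ≥0∞ :=
  (∫⁻ x' in s, g x' ^ e) ^ (1 / e)

/-- `L^e` "norm" over the whole boundary. -/
def lpAll (e : ℝ) (g : BPt n → ℝ≥0∞) : ℝ≥0∞ :=
  (∫⁻ x' : BPt n, g x' ^ e) ^ (1 / e)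

/-- Average of an `ℝ≥0∞`-valued function over a set. -/
def avgI {α : Type*} [MeasureSpace α] (s : Set α) (g : α → ℝ≥0∞) : ℝ≥0∞ :=
  (volume s)⁻¹ * ∫⁻ y in s, g y

/-- `h_{ν,a}(W)(x') = inf{t > 0 : sup_{Γ_a((t,x'))} W < ν}` for `ℝ≥0∞`-valued `W`. -/
def hfunE (a ν : ℝ) (W : Pt n → ℝ≥0∞) (x' : BPt n) : ℝ :=
  sInf {t : ℝ | 0 < t ∧ (⨆ z ∈ cone a (pt t x'), W z) < ENNReal.ofReal ν}

/-- `h_{ν,a}(w)` for a nonnegative real-valued `w`. -/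
def hfunR (a ν : ℝ) (w : Pt n → ℝ) (x' : BPt n) : ℝ :=
  hfunE a ν (fun z => ENNReal.ofReal (w z)) x'

/-- Hardy–Littlewood maximal function on the graph `Λ_h`, parametrised by `ℝ^n`. -/
def graphMax (h : BPt n → ℝ) (W : Pt n → ℝ≥0∞) (q' : BPt n) : ℝ≥0∞ :=
  ⨆ (r : ℝ) (_ : 0 < r),
    (volume {z' : BPt n | pt (h z') z' ∈ ball (pt (h q') q') r})⁻¹ *
      ∫⁻ z' in {z' : BPt n | pt (h z') z' ∈ ball (pt (h q') q') r}, W (pt (h z') z')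

/-- Hardy–Littlewood maximal operator restricted to balls contained in `S`. -/
def maxRestr (S : Set (BPt n)) (g : BPt n → ℝ≥0∞) (x' : BPt n) : ℝ≥0∞ :=
  ⨆ (c : BPt n) (ρ : ℝ) (_ : 0 < ρ) (_ : x' ∈ ball c ρ) (_ : ball c ρ ⊆ S),
    (volume (ball c ρ))⁻¹ * ∫⁻ y in ball c ρ, g y



private lemma dd_pt' (t : ℝ) (x' : BPt n) : dd (pt t x') = t := rfl

private lemma bdry_pt' (t : ℝ) (x' : BPt n) : bdry (pt t x') = x' := rfl

/-- One-sided Lipschitz estimate for the stopping-height function. -/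
private lemma hfun_le_aux (w : Pt n → ℝ) (ν a : ℝ) (ha : 0 < a)
    (hfin : ∀ x' : BPt n, ∃ t : ℝ, 0 < t ∧
      (⨆ z ∈ cone a (pt t x'), ENNReal.ofReal (w z)) < ENNReal.ofReal ν)
    (x' y' : BPt n) :
    hfunR a ν w x' ≤ hfunR a ν w y' + a⁻¹ * dist x' y' := by
  classical
  set d : ℝ := dist x' y' with hd
  have hd0 : 0 ≤ a⁻¹ * d := mul_nonneg (inv_nonneg.2 ha.le) dist_nonneg
  set S : BPt n → Set ℝ := fun q =>
    {t | 0 < t ∧ (⨆ z ∈ cone a (pt t q), ENNReal.ofReal (w z)) < ENNReal.ofReal ν} with hS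
  have hSx : (S x').Nonempty := hfin x'
  have hSy : (S y').Nonempty := hfin y'
  have hbdd : ∀ q : BPt n, BddBelow (S q) := fun q => ⟨0, fun t ht => le_of_lt ht.1⟩
  have step : ∀ t ∈ S y', sInf (S x') ≤ t + a⁻¹ * d := by
    intro t ht
    obtain ⟨s, hs⟩ := hfin x'
    by_cases hcase : s ≤ t + a⁻¹ * d
    · exact le_trans (csInf_le (hbdd x') hs) hcase
    push_neg at hcase
    have hmem : t + a⁻¹ * d ∈ S x' := by
      refine ⟨by linarith [ht.1], ?_⟩
      have hsub : ∀ z ∈ cone a (pt (t + a⁻¹ * d) x'),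
          z ∈ cone a (pt s x') ∨ z ∈ cone a (pt t y') := by
        intro z hz
        obtain ⟨hz0, hzd⟩ := hz
        rw [bdry_pt', dd_pt'] at hzd
        by_cases hle : dd z ≤ t + a⁻¹ * d
        · left
          refine ⟨hz0, ?_⟩
          rw [bdry_pt', dd_pt']
          have h1 : |t + a⁻¹ * d - dd z| = t + a⁻¹ * d - dd z :=
            abs_of_nonneg (by linarith)
          have h2 : dd z ≤ s := le_trans hle hcase.le
          calc dist x' (bdry z) < a * |t + a⁻¹ * d - dd z| := hzd
            _ = a * (t + a⁻¹ * d - dd z) := by rw [h1]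
            _ ≤ a * (s - dd z) := by nlinarith
            _ ≤ a * |s - dd z| := by
                have := le_abs_self (s - dd z); nlinarith
        · right
          push_neg at hle
          refine ⟨hz0, ?_⟩
          rw [bdry_pt', dd_pt']
          have h1 : |t + a⁻¹ * d - dd z| = dd z - (t + a⁻¹ * d) := by
            rw [abs_of_nonpos (by linarith)]; ring
          have h2 : a * a⁻¹ = 1 := mul_inv_cancel₀ (ne_of_gt ha)
          have h3 : |t - dd z| = dd z - t := by
            rw [abs_of_nonpos (by linarith)]; ring
          have h4 : dist y' x' = d := by rw [hd, dist_comm]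
          calc dist y' (bdry z) ≤ dist y' x' + dist x' (bdry z) := dist_triangle _ _ _
            _ < d + a * |t + a⁻¹ * d - dd z| := by
                rw [h4]; exact (add_lt_add_iff_left d).2 hzd
            _ = d + a * (dd z - (t + a⁻¹ * d)) := by rw [h1]
            _ = a * (dd z - t) + (d - a * a⁻¹ * d) := by ring
            _ = a * (dd z - t) := by rw [h2]; ring
            _ = a * |t - dd z| := by rw [h3]
      have hsup : (⨆ z ∈ cone a (pt (t + a⁻¹ * d) x'), ENNReal.ofReal (w z)) ≤
          max (⨆ z ∈ cone a (pt s x'), ENNReal.ofReal (w z))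
              (⨆ z ∈ cone a (pt t y'), ENNReal.ofReal (w z)) := by
        refine iSup₂_le fun z hz => ?_
        rcases hsub z hz with h | h
        · exact le_max_of_le_left
            (le_iSup₂ (f := fun (z : Pt n) (_ : z ∈ cone a (pt s x')) =>
              ENNReal.ofReal (w z)) z h)
        · exact le_max_of_le_right
            (le_iSup₂ (f := fun (z : Pt n) (_ : z ∈ cone a (pt t y')) =>
              ENNReal.ofReal (w z)) z h)
      exact lt_of_le_of_lt hsup (max_lt hs.2 ht.2)
    exact csInf_le (hbdd x') hmem
  have hle : sInf (S x') ≤ sInf (S y') + a⁻¹ * d := by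
    have h1 : sInf (S x') - a⁻¹ * d ≤ sInf (S y') :=
      le_csInf hSy fun t ht => by linarith [step t ht]
    linarith
  have hx : hfunR a ν w x' = sInf (S x') := rfl
  have hy : hfunR a ν w y' = sInf (S y') := rfl
  rw [hx, hy]
  exact hle

/-- Lemma `S3:L5` (i): the stopping-height function
`h_{ν,a}(w)(x') = inf{x₀ > 0 : sup_{Γ_a((x₀,x'))} w < ν}` is Lipschitz with constant `1/a`,
provided it is finite everywhere. -/
theorem hfun_lipschitz
    (n : ℕ) (w : Pt n → ℝ) (hw : Continuous w) (hw0 : ∀ x, 0 ≤ w x)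
    (ν a : ℝ) (hν : 0 < ν) (ha : 0 < a)
    -- `h_{ν,a}(w)(x') < ∞` for every `x'`
    (hfin : ∀ x' : BPt n, ∃ t : ℝ, 0 < t ∧
      (⨆ z ∈ cone a (pt t x'), ENNReal.ofReal (w z)) < ENNReal.ofReal ν) :
    ∀ x' y' : BPt n,
      |hfunR a ν w x' - hfunR a ν w y'| ≤ a⁻¹ * dist x' y' := by
  intro x' y'
  rw [abs_sub_le_iff]
  constructor
  · linarith [hfun_le_aux w ν a ha hfin x' y']
  · have := hfun_le_aux w ν a ha hfin y' x'
    rw [dist_comm] at this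
    linarith

end DP
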